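/- Let H be a self-adjoint operator on ℓ²(ℤ^d) and Λ ⊂ ℤ^d a finite set. Fix E* ∈ ℝ and β₂ > 0. Suppose there exists Λ′ ⊂ ℤ^d with ‖(H_{Λ′} − E*)⁻¹‖ ≤ (2β₂)⁻¹ and |Λ Δ Λ′| ≤ L, where Λ Δ Λ′ is the symmetric difference. Then the number of eigenvalues of H_Λ (counted with multiplicity) inside [E* − β₂, E* + β₂] does not exceed 3L. -/

import Mathlib

/-!
The eigenvectors of `H_Λ` with eigenvalues in `[E* - β₂, E* + β₂]` span a space `V` on which
`‖(H_Λ - E*) v‖ ≤ β₂ ‖v‖`. Imposing that `v` vanish on `Λ \ Λ'` and that `H v` vanish on `Λ' \ Λ`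
costs at most `|Λ Δ Λ'|` linear conditions. A vector `v` satisfying them, extended by zero to `Λ'`,
has the same norm and `(H_Λ' - E*) v` is the restriction of `(H_Λ - E*) v`, so the resolvent bound
gives `‖v‖ ≤ (2β₂)⁻¹ β₂ ‖v‖`, i.e. `v = 0`. Hence `dim V ≤ |Λ Δ Λ'| ≤ L`.
-/

/-- The ℓ²-operator norm of a square complex matrix. -/
noncomputable def l2OpNorm {n : Type*} [Fintype n] [DecidableEq n]
    (M : Matrix n n ℂ) : ℝ :=
  ‖LinearMap.toContinuousLinearMap (Matrix.toEuclideanLin M)‖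

open Finset Matrix

theorem Finset.sum_eq_sum_of_forall_notMem_inter {ι M : Type*} [AddCommMonoid M] [DecidableEq ι]
    {s t : Finset ι} {f : ι → M} (hf : ∀ x ∉ s ∩ t, f x = 0) :
    ∑ x ∈ s, f x = ∑ x ∈ t, f x := by
  rw [← sum_subset inter_subset_left fun x _ hx => hf x hx,
    ← sum_subset inter_subset_right fun x _ hx => hf x hx]

theorem EuclideanSpace.norm_toLp_restrict_le {ι 𝕜 : Type*} [RCLike 𝕜] {Ω Ω' : Finset ι}
    {f : ι → 𝕜} (hf : ∀ x ∈ Ω, x ∉ Ω' → f x = 0) :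
    ‖WithLp.toLp 2 (Ω.restrict f)‖ ≤ ‖WithLp.toLp 2 (Ω'.restrict f)‖ := by
  classical
  rw [EuclideanSpace.norm_eq, EuclideanSpace.norm_eq]
  gcongr
  simp only [Finset.restrict, sum_coe_sort Ω fun x => ‖f x‖ ^ 2,
    sum_coe_sort Ω' fun x => ‖f x‖ ^ 2]
  rw [← sum_subset inter_subset_left fun x hx hx' => by
    simp [hf x hx fun h => hx' (mem_inter.mpr ⟨hx, h⟩)]]
  exact sum_le_sum_of_subset_of_nonneg inter_subset_right fun _ _ _ => by positivity

theorem Matrix.submatrix_sub_smul_one_mulVec_restrict {ι R : Type*} [CommRing R] [DecidableEq ι]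
    (H : Matrix ι ι R) (Λ : Finset ι) (E : R) (f : ι → R) :
    (H.submatrix (↑) (↑) - E • 1 : Matrix Λ Λ R) *ᵥ Λ.restrict f =
      Λ.restrict fun x => ∑ y ∈ Λ, H x y * f y - E * f x := by
  ext x
  rw [sub_mulVec, smul_mulVec, one_mulVec]
  simp [mulVec, dotProduct, Finset.restrict, sum_attach Λ fun y => H x y * f y]

theorem Matrix.norm_le_l2OpNorm_inv_mul {n : Type*} [Fintype n] [DecidableEq n]
    {M : Matrix n n ℂ} (hM : IsUnit M.det) (w : EuclideanSpace ℂ n) :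
    ‖w‖ ≤ l2OpNorm M⁻¹ * ‖toEuclideanLin M w‖ := by
  have : w = LinearMap.toContinuousLinearMap (toEuclideanLin M⁻¹) (toEuclideanLin M w) := by
    simp [toLpLin_apply, mulVec_mulVec, nonsing_inv_mul M hM]
  conv_lhs => rw [this]
  exact ContinuousLinearMap.le_opNorm _ _

theorem EuclideanSpace.norm_le_mul_norm_of_forall {𝕜 n : Type*} [RCLike 𝕜] [Fintype n]
    {x y : EuclideanSpace 𝕜 n} {c : ℝ} (hc : 0 ≤ c) (h : ∀ i, ‖x i‖ ≤ c * ‖y i‖) :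
    ‖x‖ ≤ c * ‖y‖ := by
  rw [EuclideanSpace.norm_eq, EuclideanSpace.norm_eq, ← Real.sqrt_sq hc,
    ← Real.sqrt_mul (sq_nonneg c), mul_sum]
  gcongr with i
  rw [← mul_pow]
  exact pow_le_pow_left₀ (norm_nonneg _) (h i) 2

namespace Matrix.IsHermitian

variable {𝕜 n : Type*} [RCLike 𝕜] [Fintype n] [DecidableEq n] {A : Matrix n n 𝕜}

theorem eigenvectorBasis_repr_toEuclideanLin (hA : A.IsHermitian) (v : EuclideanSpace 𝕜 n)
    (i : n) :
    hA.eigenvectorBasis.repr (toEuclideanLin A v) i =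
      hA.eigenvalues i * hA.eigenvectorBasis.repr v i := by
  have hsymm := isSymmetric_toEuclideanLin_iff.mpr hA
  have heig : toEuclideanLin A (hA.eigenvectorBasis i) =
      (hA.eigenvalues i : 𝕜) • hA.eigenvectorBasis i := by
    rw [toLpLin_apply, hA.mulVec_eigenvectorBasis, RCLike.real_smul_eq_coe_smul (K := 𝕜)]
    rfl
  simp only [OrthonormalBasis.repr_apply_apply]
  rw [← hsymm, heig, inner_smul_left, RCLike.conj_ofReal]

theorem exists_submodule_card_le_finrank (hA : A.IsHermitian) (E : ℝ) {β : ℝ} (hβ : 0 ≤ β) :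
    ∃ V : Submodule 𝕜 (EuclideanSpace 𝕜 n),
      #{i | hA.eigenvalues i ∈ Set.Icc (E - β) (E + β)} ≤ Module.finrank 𝕜 V ∧
      ∀ v ∈ V, ‖toEuclideanLin (A - (E : 𝕜) • 1) v‖ ≤ β * ‖v‖ := by
  set S : Finset n := {i | hA.eigenvalues i ∈ Set.Icc (E - β) (E + β)}
  have hli := hA.eigenvectorBasis.orthonormal.linearIndependent.comp _
    (Subtype.val_injective (p := (· ∈ S)))
  refine ⟨Submodule.span 𝕜 (Set.range (hA.eigenvectorBasis ∘ Subtype.val : S → _)), ?_,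
    fun v hv => ?_⟩
  · simp [finrank_span_eq_card hli]
  have hrepr : ∀ i ∉ S, hA.eigenvectorBasis.repr v i = 0 := by
    intro i hi
    refine Submodule.span_induction ?_ (by simp) (fun x y _ _ hx hy => by simp [hx, hy])
      (fun c x _ hx => by simp [hx]) hv
    rintro _ ⟨j, rfl⟩
    have : (j : n) ≠ i := fun h => hi (h ▸ j.2)
    simp [OrthonormalBasis.repr_self, Ne.symm this]
  rw [← hA.eigenvectorBasis.repr.norm_map, ← hA.eigenvectorBasis.repr.norm_map v]
  refine EuclideanSpace.norm_le_mul_norm_of_forall hβ fun i => ?_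
  simp only [map_sub, LinearMap.sub_apply, map_smul, toLpLin_one, LinearMap.smul_apply,
    LinearMap.id_apply, PiLp.sub_apply, PiLp.smul_apply, eigenvectorBasis_repr_toEuclideanLin,
    smul_eq_mul, ← sub_mul, norm_mul]
  by_cases hi : i ∈ S
  · obtain ⟨hlo, hhi⟩ := (mem_filter.mp hi).2
    gcongr
    rw [← RCLike.ofReal_sub, RCLike.norm_ofReal, abs_le]
    constructor <;> linarith
  · simp [hrepr i hi]

end Matrix.IsHermitian

theorem restrict_eq_zero_of_l2OpNorm_inv_le {ι : Type*} [DecidableEq ι] {H : Matrix ι ι ℂ}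
    {Λ Λ' : Finset ι} {E β : ℝ} (hβ : 0 < β)
    (hinv : IsUnit (H.submatrix (↑) (↑) - (E : ℂ) • 1 : Matrix Λ' Λ' ℂ).det)
    (hnorm : l2OpNorm (H.submatrix (↑) (↑) - (E : ℂ) • 1 : Matrix Λ' Λ' ℂ)⁻¹ ≤ (2 * β)⁻¹)
    {f : ι → ℂ} (hsupp : ∀ x ∉ Λ ∩ Λ', f x = 0)
    (hbdry : ∀ x ∈ Λ' \ Λ, ∑ y ∈ Λ, H x y * f y = 0)
    (hlow : ‖toEuclideanLin (H.submatrix (↑) (↑) - (E : ℂ) • 1 : Matrix Λ Λ ℂ)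
      (WithLp.toLp 2 (Λ.restrict f))‖ ≤ β * ‖WithLp.toLp 2 (Λ.restrict f)‖) :
    WithLp.toLp 2 (Λ.restrict f) = 0 := by
  set g : ι → ℂ := fun x => ∑ y ∈ Λ, H x y * f y - E * f x
  have hsupp' : ∀ x ∉ Λ' ∩ Λ, f x = 0 := by rwa [inter_comm]
  have hnorm_eq : ‖WithLp.toLp 2 (Λ'.restrict f)‖ = ‖WithLp.toLp 2 (Λ.restrict f)‖ :=
    le_antisymm
      (EuclideanSpace.norm_toLp_restrict_le fun x _ hx => hsupp' x fun h => hx (mem_inter.mp h).2)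
      (EuclideanSpace.norm_toLp_restrict_le fun x _ hx => hsupp x fun h => hx (mem_inter.mp h).2)
  have hΛ : toEuclideanLin (H.submatrix (↑) (↑) - (E : ℂ) • 1 : Matrix Λ Λ ℂ)
      (WithLp.toLp 2 (Λ.restrict f)) = WithLp.toLp 2 (Λ.restrict g) := by
    rw [toLpLin_toLp, toLin'_apply, submatrix_sub_smul_one_mulVec_restrict]
  have hΛ' : toEuclideanLin (H.submatrix (↑) (↑) - (E : ℂ) • 1 : Matrix Λ' Λ' ℂ)
      (WithLp.toLp 2 (Λ'.restrict f)) = WithLp.toLp 2 (Λ'.restrict g) := by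
    rw [toLpLin_toLp, toLin'_apply, submatrix_sub_smul_one_mulVec_restrict]
    have hsum : ∀ x, ∑ y ∈ Λ', H x y * f y = ∑ y ∈ Λ, H x y * f y := fun x =>
      sum_eq_sum_of_forall_notMem_inter fun y hy => by rw [hsupp' y hy, mul_zero]
    simp only [hsum, g]
  have hg : ‖WithLp.toLp 2 (Λ'.restrict g)‖ ≤ ‖WithLp.toLp 2 (Λ.restrict g)‖ :=
    EuclideanSpace.norm_toLp_restrict_le fun x hx' hx => by
      simp [g, hbdry x (mem_sdiff.mpr ⟨hx', hx⟩), hsupp x fun h => hx (mem_inter.mp h).1]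
  have : ‖WithLp.toLp 2 (Λ.restrict f)‖ ≤ ‖WithLp.toLp 2 (Λ.restrict f)‖ / 2 :=
    calc ‖WithLp.toLp 2 (Λ.restrict f)‖
        = ‖WithLp.toLp 2 (Λ'.restrict f)‖ := hnorm_eq.symm
      _ ≤ (2 * β)⁻¹ * ‖WithLp.toLp 2 (Λ'.restrict g)‖ := by
          refine (norm_le_l2OpNorm_inv_mul hinv _).trans ?_
          rw [hΛ']
          gcongr
      _ ≤ (2 * β)⁻¹ * (β * ‖WithLp.toLp 2 (Λ.restrict f)‖) := by
          gcongr
          exact hg.trans (hΛ ▸ hlow)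
      _ = ‖WithLp.toLp 2 (Λ.restrict f)‖ / 2 := by field_simp
  rw [← norm_eq_zero]
  linarith [norm_nonneg (WithLp.toLp 2 (Λ.restrict f))]

open scoped symmDiff

/-- On `Λ ∆ Λ'`, the condition `x ∈ Λ` singles out `Λ \ Λ'`. -/
noncomputable def Matrix.symmDiffConstraints {ι R : Type*} [CommSemiring R] [DecidableEq ι]
    (H : Matrix ι ι R) (Λ Λ' : Finset ι) : (ι → R) →ₗ[R] (↥(Λ ∆ Λ') → R) where
  toFun f x := if (x : ι) ∈ Λ then f x else ∑ y ∈ Λ, H x y * f y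
  map_add' f g := by
    ext x
    by_cases hx : (x : ι) ∈ Λ <;> simp [hx, mul_add, sum_add_distrib]
  map_smul' c f := by
    ext x
    by_cases hx : (x : ι) ∈ Λ <;> simp [hx, mul_sum, mul_left_comm]

theorem finrank_le_card_symmDiff_of_l2OpNorm_inv_le {ι : Type*} [DecidableEq ι]
    {H : Matrix ι ι ℂ} {Λ Λ' : Finset ι} {E β : ℝ} (hβ : 0 < β)
    (hinv : IsUnit (H.submatrix (↑) (↑) - (E : ℂ) • 1 : Matrix Λ' Λ' ℂ).det)
    (hnorm : l2OpNorm (H.submatrix (↑) (↑) - (E : ℂ) • 1 : Matrix Λ' Λ' ℂ)⁻¹ ≤ (2 * β)⁻¹)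
    (V : Submodule ℂ (EuclideanSpace ℂ Λ))
    (hV : ∀ v ∈ V, ‖toEuclideanLin (H.submatrix (↑) (↑) - (E : ℂ) • 1 : Matrix Λ Λ ℂ) v‖ ≤
      β * ‖v‖) :
    Module.finrank ℂ V ≤ #(Λ ∆ Λ') := by
  set extend := Function.ExtendByZero.linearMap ℂ ((↑) : Λ → ι) ∘ₗ
    (WithLp.linearEquiv 2 ℂ (Λ → ℂ)).toLinearMap
  have hrestrict : ∀ v, WithLp.toLp 2 (Λ.restrict (extend v)) = v := fun v => by
    ext x
    exact Subtype.val_injective.extend_apply _ _ x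
  have hinj : Function.Injective ((symmDiffConstraints H Λ Λ' ∘ₗ extend).domRestrict V) := by
    rw [← LinearMap.ker_eq_bot, LinearMap.ker_eq_bot']
    rintro ⟨v, hv⟩ hK
    have hK' : ∀ x (hx : x ∈ Λ ∆ Λ'), symmDiffConstraints H Λ Λ' (extend v) ⟨x, hx⟩ = 0 :=
      fun x hx => congr_fun hK ⟨x, hx⟩
    have hout : ∀ x ∉ Λ, extend v x = 0 := fun x hx =>
      Function.extend_apply' _ _ _ (by rintro ⟨y, rfl⟩; exact hx y.2)
    have hzero := restrict_eq_zero_of_l2OpNorm_inv_le hβ hinv hnorm (f := extend v)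
      (fun x hx => by
        by_cases hxΛ : x ∈ Λ
        · have hxΛ' : x ∉ Λ' := fun h => hx (mem_inter.mpr ⟨hxΛ, h⟩)
          simpa [symmDiffConstraints, hxΛ] using
            hK' x (mem_symmDiff.mpr (Or.inl ⟨hxΛ, hxΛ'⟩))
        · exact hout x hxΛ)
      (fun x hx => by
        obtain ⟨hxΛ', hxΛ⟩ := mem_sdiff.mp hx
        simpa [symmDiffConstraints, hxΛ] using hK' x (mem_symmDiff.mpr (Or.inr ⟨hxΛ', hxΛ⟩)))
      (by rw [hrestrict]; exact hV v hv)
    rw [hrestrict] at hzero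
    simp [hzero]
  simpa using LinearMap.finrank_le_finrank_of_injective hinj

theorem eigenvalue_counting_general (d : ℕ) (H : (Fin d → ℤ) → (Fin d → ℤ) → ℂ)
    (Estar β₂ : ℝ) (hβ : 0 < β₂) (L : ℕ)
    (Λ Λ' : Finset (Fin d → ℤ))
    (hA : (Matrix.of fun x y : ↥Λ => H x.1 y.1).IsHermitian)
    (hinv : IsUnit ((Matrix.of fun x y : ↥Λ' => H x.1 y.1)
      - (Estar : ℂ) • (1 : Matrix ↥Λ' ↥Λ' ℂ)).det)
    (hnorm : l2OpNorm (((Matrix.of fun x y : ↥Λ' => H x.1 y.1)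
      - (Estar : ℂ) • (1 : Matrix ↥Λ' ↥Λ' ℂ))⁻¹) ≤ (2 * β₂)⁻¹)
    (hcard : ((Λ \ Λ') ∪ (Λ' \ Λ)).card ≤ L) :
    (Finset.univ.filter fun i =>
      hA.eigenvalues i ∈ Set.Icc (Estar - β₂) (Estar + β₂)).card ≤ 3 * L := by
  obtain ⟨V, hcardV, hV⟩ := hA.exists_submodule_card_le_finrank Estar hβ.le
  calc _ ≤ Module.finrank ℂ V := hcardV
    _ ≤ #(Λ ∆ Λ') := finrank_le_card_symmDiff_of_l2OpNorm_inv_le hβ hinv hnorm V hV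
    _ ≤ 3 * L := by rw [Finset.symmDiff_def]; omega

/-- Eigenvalue counting via Green's functions: let `H` be a self-adjoint operator on
`ℤ^d`, `Λ` a finite set, `E* ∈ ℝ` and `β₂ > 0`. If there exists `Λ′` with
`‖(H_{Λ′} − E*)⁻¹‖ ≤ (2β₂)⁻¹` and `|Λ Δ Λ′| ≤ L`, then the number of eigenvalues of
`H_Λ` (with multiplicity) in `[E*−β₂, E*+β₂]` is at most `3L`. -/
theorem eigenvalue_counting (d : ℕ) (H : (Fin d → ℤ) → (Fin d → ℤ) → ℂ)
    (hsa : ∀ x y, H x y = starRingEnd ℂ (H y x))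
    (Estar β₂ : ℝ) (hβ : 0 < β₂) (L : ℕ)
    (Λ Λ' : Finset (Fin d → ℤ))
    (hA : (Matrix.of fun x y : ↥Λ => H x.1 y.1).IsHermitian)
    (hinv : IsUnit ((Matrix.of fun x y : ↥Λ' => H x.1 y.1)
      - (Estar : ℂ) • (1 : Matrix ↥Λ' ↥Λ' ℂ)).det)
    (hnorm : l2OpNorm (((Matrix.of fun x y : ↥Λ' => H x.1 y.1)
      - (Estar : ℂ) • (1 : Matrix ↥Λ' ↥Λ' ℂ))⁻¹) ≤ (2 * β₂)⁻¹)
    (hcard : ((Λ \ Λ') ∪ (Λ' \ Λ)).card ≤ L) :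
    (Finset.univ.filter fun i =>
      hA.eigenvalues i ∈ Set.Icc (Estar - β₂) (Estar + β₂)).card ≤ 3 * L :=
  eigenvalue_counting_general d H Estar β₂ hβ L Λ Λ' hA hinv hnorm hcard
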